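/- Let W be a real 4×4 matrix satisfying Wᵀ·Q_D·W = Q_W, and suppose every entry W_{i,2} of its second column is nonzero. Set b_i := W_{i,2} and x_i := (W_{i,3}/b_i, W_{i,4}/b_i) ∈ ℝ². Then: (a) W_{i,1} = b_i‖x_i‖² − 1/b_i for each i, and (b) for all i ≠ j, ‖x_i − x_j‖² = (1/b_i + 1/b_j)². That is, W is the augmented curvature-center coordinate matrix of an ordered, oriented Descartes configuration of four pairwise compatibly tangent circles. -/

import Mathlib

open Matrix

/-- The matrix of the Descartes quadratic form: diagonal entries `1/2`,
off-diagonal entries `-1/2`. -/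
noncomputable def QD : Matrix (Fin 4) (Fin 4) ℝ :=
  Matrix.of fun i j => if i = j then 1/2 else -1/2

/-- The matrix of the Wilker quadratic form. -/
noncomputable def QW : Matrix (Fin 4) (Fin 4) ℝ :=
  !![0, -4, 0, 0; -4, 0, 0, 0; 0, 0, 2, 0; 0, 0, 0, 2]

/-!
Since `QW` is invertible, `Wᵀ QD W = QW` forces `W` to be invertible, and inverting both sides
gives the dual relation `W QW⁻¹ Wᵀ = QD⁻¹ = QD`. Entrywise this says that the rows `w i` of `W`
satisfy `⟪w i, w j⟫ = QD i j` for the bilinear form of `QW⁻¹`. The diagonal entries `1/2` express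
the first coordinate of each row through the other three, and an off-diagonal entry `-1/2` is,
after clearing denominators, exactly the tangency relation between two circles.
-/

theorem Matrix.mul_inv_mul_transpose_eq_inv {n R : Type*} [Fintype n] [DecidableEq n] [CommRing R]
    {W A B : Matrix n n R} (h : Wᵀ * A * W = B) (hB : IsUnit B.det) :
    W * B⁻¹ * Wᵀ = A⁻¹ := by
  have hleft : (B⁻¹ * Wᵀ * A) * W = 1 := by
    rw [← B.nonsing_inv_mul hB, ← h]
    simp only [Matrix.mul_assoc]
  have hright : (W * B⁻¹ * Wᵀ) * A = 1 := by
    simpa only [Matrix.mul_assoc] using mul_eq_one_comm.mp hleft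
  exact (inv_eq_left_inv hright).symm

lemma QD_mul_QD : QD * QD = 1 := by
  ext i j
  fin_cases i <;> fin_cases j <;>
    simp [Matrix.mul_apply, Fin.sum_univ_four, QD] <;> norm_num

lemma QD_inv : QD⁻¹ = QD :=
  inv_eq_left_inv QD_mul_QD

noncomputable def QWinv : Matrix (Fin 4) (Fin 4) ℝ :=
  !![0, -1/4, 0, 0; -1/4, 0, 0, 0; 0, 0, 1/2, 0; 0, 0, 0, 1/2]

lemma QWinv_mul_QW : QWinv * QW = 1 := by
  ext i j
  fin_cases i <;> fin_cases j <;>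
    simp [Matrix.mul_apply, Fin.sum_univ_four, QW, QWinv]

lemma QW_inv : QW⁻¹ = QWinv :=
  inv_eq_left_inv QWinv_mul_QW

lemma isUnit_det_QW : IsUnit QW.det :=
  isUnit_det_of_left_inverse QWinv_mul_QW

noncomputable def wilkerDual (v w : Fin 4 → ℝ) : ℝ :=
  -(1/4) * (v 0 * w 1 + v 1 * w 0) + (1/2) * (v 2 * w 2 + v 3 * w 3)

lemma mul_QWinv_mul_transpose_apply (W : Matrix (Fin 4) (Fin 4) ℝ) (i j : Fin 4) :
    (W * QWinv * Wᵀ) i j = wilkerDual (W i) (W j) := by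
  simp [Matrix.mul_apply, Fin.sum_univ_four, QWinv, wilkerDual]
  ring

lemma wilkerDual_rows_eq_QD {W : Matrix (Fin 4) (Fin 4) ℝ} (hW : Wᵀ * QD * W = QW) (i j : Fin 4) :
    wilkerDual (W i) (W j) = QD i j := by
  rw [← mul_QWinv_mul_transpose_apply, ← QW_inv, ← QD_inv,
    Matrix.mul_inv_mul_transpose_eq_inv hW isUnit_det_QW]

lemma first_coord_eq_of_wilkerDual_self {v : Fin 4 → ℝ} (hb : v 1 ≠ 0)
    (hv : wilkerDual v v = 1/2) :
    v 0 = v 1 * ((v 2 / v 1) ^ 2 + (v 3 / v 1) ^ 2) - 1 / v 1 := by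
  unfold wilkerDual at hv
  field_simp
  linear_combination (-2) * hv

lemma center_dist_sq_of_wilkerDual {v w : Fin 4 → ℝ} (hv0 : v 1 ≠ 0) (hw0 : w 1 ≠ 0)
    (hv : wilkerDual v v = 1/2) (hw : wilkerDual w w = 1/2) (hvw : wilkerDual v w = -1/2) :
    (v 2 / v 1 - w 2 / w 1) ^ 2 + (v 3 / v 1 - w 3 / w 1) ^ 2 = (1 / v 1 + 1 / w 1) ^ 2 := by
  unfold wilkerDual at hv hw hvw
  field_simp
  linear_combination (2 * w 1 ^ 2) * hv + (2 * v 1 ^ 2) * hw - (4 * v 1 * w 1) * hvw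

/-- **Augmented Euclidean Descartes Theorem (converse direction, no lines).**
If a real `4 × 4` matrix `W` satisfies `Wᵀ * QD * W = QW` and every entry of its
second column is nonzero, then, setting `b i := W i 1` and
`x i := (W i 2 / b i, W i 3 / b i)`:
(a) the first column records `b i * ‖x i‖² - 1 / b i`; and
(b) the four oriented circles with curvature `b i` and center `x i` are pairwise
tangent with compatible orientations. -/
theorem descartes_configuration_of_augmented_matrix
    (W : Matrix (Fin 4) (Fin 4) ℝ)
    (hW : Wᵀ * QD * W = QW)
    (hcol : ∀ i, W i 1 ≠ 0) :
    (∀ i, W i 0 = W i 1 * ((W i 2 / W i 1) ^ 2 + (W i 3 / W i 1) ^ 2) - 1 / W i 1) ∧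
    (∀ i j, i ≠ j →
      (W i 2 / W i 1 - W j 2 / W j 1) ^ 2 + (W i 3 / W i 1 - W j 3 / W j 1) ^ 2
        = (1 / W i 1 + 1 / W j 1) ^ 2) := by
  have hrows := wilkerDual_rows_eq_QD hW
  have hself : ∀ i, wilkerDual (W i) (W i) = 1/2 := fun i => by simp [hrows, QD]
  refine ⟨fun i => first_coord_eq_of_wilkerDual_self (hcol i) (hself i), fun i j hij => ?_⟩
  exact center_dist_sq_of_wilkerDual (hcol i) (hcol j) (hself i) (hself j)
    (by simp [hrows, QD, hij])
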